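/- arXiv:1305.2712 — 2 statements merged into one kernel-verified Lean document; each statement's English description precedes it below -/
import Mathlib

section
/- Let $c_0 > 0$, $\Delta t > 0$, $n \ge 1$ an integer, and $k \ge 0$ an integer. Then $1 + c_0 \Delta t \sum_{l=0}^{k} \frac{1}{l!} \cdot \frac{e^{c_0(l+1)(n-1)\Delta t} - 1}{e^{c_0(l+1)\Delta t} - 1} \le \sum_{l=0}^{k+1} \frac{e^{c_0 l (n-1)\Delta t}}{l!}$. -/
/-!
Split off the `l = 0` term `1` of the right-hand sum and compare the rest termwise, shifting the
index by one. With `x = c0 (l+1) Δt` the `l`-th term on the left is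
`(x / (eˣ - 1)) (E - 1) / (l+1)!`, and `0 ≤ x / (eˣ - 1) ≤ 1` because `x ≤ eˣ - 1`, so it is at
most `E / (l+1)!` since `E > 0`.
-/

open Real Finset

lemma div_exp_sub_one_le_one {x : ℝ} (hx : 0 ≤ x) : x / (exp x - 1) ≤ 1 :=
  div_le_one_of_le₀ (by linarith [add_one_le_exp x]) (by linarith [add_one_le_exp x])

lemma mul_div_exp_sub_one_le {x E : ℝ} (hx : 0 ≤ x) (hE : 0 ≤ E) :
    x * ((E - 1) / (exp x - 1)) ≤ E := by
  have h_ratio_le : x / (exp x - 1) ≤ 1 := div_exp_sub_one_le_one hx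
  have h_ratio_nonneg : 0 ≤ x / (exp x - 1) := div_nonneg hx (by linarith [add_one_le_exp x])
  calc x * ((E - 1) / (exp x - 1)) = x / (exp x - 1) * (E - 1) := by ring
    _ ≤ E := by nlinarith

lemma mul_exp_ratio_div_factorial_le (a y : ℝ) (ha : 0 ≤ a) (l : ℕ) :
    a * (1 / (l.factorial : ℝ) * ((exp (y * ((l : ℝ) + 1)) - 1) / (exp (a * ((l : ℝ) + 1)) - 1)))
      ≤ exp (y * ((l : ℝ) + 1)) / ((l + 1).factorial : ℝ) := by
  have hl : (0 : ℝ) < (l : ℝ) + 1 := by positivity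
  have key := mul_div_exp_sub_one_le (E := exp (y * ((l : ℝ) + 1))) (mul_nonneg ha hl.le)
    (exp_pos _).le
  calc _ = a * ((l : ℝ) + 1) * ((exp (y * ((l : ℝ) + 1)) - 1) / (exp (a * ((l : ℝ) + 1)) - 1))
        / (((l : ℝ) + 1) * l.factorial) := by field_simp
    _ ≤ exp (y * ((l : ℝ) + 1)) / (((l : ℝ) + 1) * l.factorial) := by gcongr
    _ = _ := by rw [Nat.factorial_succ]; push_cast; ring

theorem stability_induction_step_general (c0 Δt : ℝ) (hc : 0 < c0) (hΔ : 0 < Δt)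
    (n : ℕ) (k : ℕ) :
    1 + c0 * Δt * ∑ l ∈ Finset.range (k + 1),
        (1 / (l.factorial : ℝ)) *
          ((Real.exp (c0 * ((l : ℝ) + 1) * ((n : ℝ) - 1) * Δt) - 1) /
            (Real.exp (c0 * ((l : ℝ) + 1) * Δt) - 1))
      ≤ ∑ l ∈ Finset.range (k + 2),
          Real.exp (c0 * (l : ℝ) * ((n : ℝ) - 1) * Δt) / (l.factorial : ℝ) := by
  rw [sum_range_succ' _ (k + 1), mul_sum, add_comm]
  simp only [Nat.cast_zero, mul_zero, zero_mul, exp_zero, Nat.factorial_zero, Nat.cast_one,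
    div_one]
  gcongr with l
  calc _ = c0 * Δt * (1 / (l.factorial : ℝ) * ((exp (c0 * ((n : ℝ) - 1) * Δt * ((l : ℝ) + 1)) - 1)
          / (exp (c0 * Δt * ((l : ℝ) + 1)) - 1))) := by ring_nf
    _ ≤ _ := mul_exp_ratio_div_factorial_le (c0 * Δt) (c0 * ((n : ℝ) - 1) * Δt) (by positivity) l
    _ = _ := by push_cast; ring_nf

theorem stability_induction_step (c0 Δt : ℝ) (hc : 0 < c0) (hΔ : 0 < Δt)
    (n : ℕ) (hn : 1 ≤ n) (k : ℕ) :
    1 + c0 * Δt * ∑ l ∈ Finset.range (k + 1),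
        (1 / (l.factorial : ℝ)) *
          ((Real.exp (c0 * ((l : ℝ) + 1) * ((n : ℝ) - 1) * Δt) - 1) /
            (Real.exp (c0 * ((l : ℝ) + 1) * Δt) - 1))
      ≤ ∑ l ∈ Finset.range (k + 2),
          Real.exp (c0 * (l : ℝ) * ((n : ℝ) - 1) * Δt) / (l.factorial : ℝ) :=
  stability_induction_step_general c0 Δt hc hΔ n k
end

section
/- Suppose $(E_n^k)$, for $1 \le n \le N$ and $k \ge 0$, are nonnegative reals satisfying $E_n^k \le \alpha \sum_{j=1}^{n-1} E_j^k + \beta \sum_{j=1}^{n-1} E_j^{k-1}$ for all $k \ge 1$ and all $n$, with $\alpha, \beta \ge 0$, and $E_n^0 \le B$ for all $n$. Then for all $k \ge 0$ and all $1 \le n \le N$, $E_n^k \le B\, \beta^k \binom{n-1}{k} (1+\alpha)^{n-1-k}$, where $\binom{n-1}{k} = 0$ when $k > n-1$; in particular $E_n^k = 0$ whenever $k \ge n$. -/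
theorem parareal_error_recursion (N : ℕ) (E : ℕ → ℕ → ℝ) (α β B : ℝ)
    (hα : 0 ≤ α) (hβ : 0 ≤ β) (hB : 0 ≤ B)
    (hnonneg : ∀ n k : ℕ, 1 ≤ n → n ≤ N → 0 ≤ E n k)
    (hrec : ∀ n k : ℕ, 1 ≤ n → n ≤ N → 1 ≤ k →
      E n k ≤ α * ∑ j ∈ Finset.Icc 1 (n - 1), E j k
            + β * ∑ j ∈ Finset.Icc 1 (n - 1), E j (k - 1))
    (h0 : ∀ n, 1 ≤ n → n ≤ N → E n 0 ≤ B) :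
    ∀ n k : ℕ, 1 ≤ n → n ≤ N →
      (E n k ≤ B * β ^ k * ((n - 1).choose k : ℝ) * (1 + α) ^ (n - 1 - k)) ∧
      (n ≤ k → E n k = 0) := by
  have h1α : (1:ℝ) ≤ 1 + α := by linarith
  -- the key combinatorial identity
  have hg : ∀ k n : ℕ, ((n.choose (k+1) : ℝ) * (1+α)^(n-(k+1))) =
      α * ∑ m ∈ Finset.range n, (m.choose (k+1) : ℝ) * (1+α)^(m-(k+1))
      + ∑ m ∈ Finset.range n, (m.choose k : ℝ) * (1+α)^(m-k) := by
    intro k n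
    induction n with
    | zero => simp
    | succ n ih =>
      rw [Finset.sum_range_succ, Finset.sum_range_succ]
      have step : (((n+1).choose (k+1) : ℝ)) * (1+α)^(n+1-(k+1)) =
          (1+α) * ((n.choose (k+1) : ℝ) * (1+α)^(n-(k+1)))
          + (n.choose k : ℝ) * (1+α)^(n-k) := by
        rcases lt_trichotomy n k with h | h | h
        · simp [Nat.choose_eq_zero_of_lt, h, Nat.lt_succ_of_lt h,
            Nat.choose_eq_zero_of_lt (Nat.succ_lt_succ h)]
        · subst h
          simp [Nat.choose_eq_zero_of_lt]
        · have h1 : k + 1 ≤ n := h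
          have h2 : n - k = (n - (k+1)) + 1 := by omega
          have h3 : n + 1 - (k+1) = n - k := by omega
          rw [h3, Nat.choose_succ_succ, h2, pow_succ]
          push_cast
          ring
      rw [step, ih]
      ring
  intro n
  induction n using Nat.strong_induction_on with
  | _ n ih =>
    intro k hn1 hnN
    have keyB : E n k ≤ B * β ^ k * ((n - 1).choose k : ℝ) * (1 + α) ^ (n - 1 - k) := by
      cases k with
      | zero =>
        have hpow : (1:ℝ) ≤ (1+α)^(n-1) := one_le_pow₀ h1α
        have := h0 n hn1 hnN
        simp only [pow_zero, Nat.choose_zero_right, Nat.cast_one, mul_one, Nat.sub_zero,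
          one_mul]
        calc E n 0 ≤ B := this
          _ ≤ B * (1+α)^(n-1) := le_mul_of_one_le_right hB hpow
      | succ k' =>
        have hrec' := hrec n (k'+1) hn1 hnN (Nat.le_add_left 1 k')
        simp only [Nat.add_sub_cancel] at hrec'
        have hre : ∀ (k : ℕ), ∑ j ∈ Finset.Icc 1 (n-1), E j k
            = ∑ i ∈ Finset.range (n-1), E (1+i) k := by
          intro k
          have h1 : Finset.Icc 1 (n-1) = Finset.Ico 1 n := by
            rw [← Finset.Ico_add_one_right_eq_Icc]
            congr 1
            omega
          rw [h1, Finset.sum_Ico_eq_sum_range]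
        have hbd : ∀ (k : ℕ), ∑ i ∈ Finset.range (n-1), E (1+i) k
            ≤ ∑ i ∈ Finset.range (n-1), B * β ^ k * ((i.choose k : ℝ)) * (1+α)^(i-k) := by
          intro k
          apply Finset.sum_le_sum
          intro i hi
          rw [Finset.mem_range] at hi
          have h1 : 1 + i < n := by omega
          have h2 : 1 + i ≤ N := by omega
          have := (ih (1+i) h1 k (by omega) h2).1
          simpa using this
        have hs1 : ∑ j ∈ Finset.Icc 1 (n-1), E j (k'+1)
            ≤ ∑ i ∈ Finset.range (n-1), B * β ^ (k'+1) * ((i.choose (k'+1) : ℝ)) * (1+α)^(i-(k'+1)) := by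
          rw [hre]; exact hbd (k'+1)
        have hs2 : ∑ j ∈ Finset.Icc 1 (n-1), E j k'
            ≤ ∑ i ∈ Finset.range (n-1), B * β ^ k' * ((i.choose k' : ℝ)) * (1+α)^(i-k') := by
          rw [hre]; exact hbd k'
        have key : E n (k'+1) ≤
            B * β ^ (k'+1) *
              (α * ∑ m ∈ Finset.range (n-1), (m.choose (k'+1) : ℝ) * (1+α)^(m-(k'+1))
               + ∑ m ∈ Finset.range (n-1), (m.choose k' : ℝ) * (1+α)^(m-k')) := by
          have t1 : α * ∑ j ∈ Finset.Icc 1 (n-1), E j (k'+1)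
              ≤ α * ∑ i ∈ Finset.range (n-1), B * β ^ (k'+1) * ((i.choose (k'+1) : ℝ)) * (1+α)^(i-(k'+1)) :=
            mul_le_mul_of_nonneg_left hs1 hα
          have t2 : β * ∑ j ∈ Finset.Icc 1 (n-1), E j k'
              ≤ β * ∑ i ∈ Finset.range (n-1), B * β ^ k' * ((i.choose k' : ℝ)) * (1+α)^(i-k') :=
            mul_le_mul_of_nonneg_left hs2 hβ
          have := le_trans hrec' (add_le_add t1 t2)
          calc E n (k'+1) ≤ _ := this
            _ = B * β ^ (k'+1) *
              (α * ∑ m ∈ Finset.range (n-1), (m.choose (k'+1) : ℝ) * (1+α)^(m-(k'+1))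
               + ∑ m ∈ Finset.range (n-1), (m.choose k' : ℝ) * (1+α)^(m-k')) := by
              simp only [Finset.mul_sum, mul_add]
              congr 1 <;> (apply Finset.sum_congr rfl; intro i _; ring)
        rw [← hg k' (n-1)] at key
        calc E n (k'+1) ≤ _ := key
          _ = B * β ^ (k'+1) * (((n-1).choose (k'+1) : ℝ)) * (1+α)^(n-1-(k'+1)) := by ring
    refine ⟨keyB, fun hk => ?_⟩
    have hz : (n-1).choose k = 0 := Nat.choose_eq_zero_of_lt (by omega)
    have : E n k ≤ 0 := by
      rw [hz] at keyB
      simpa using keyB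
    exact le_antisymm this (hnonneg n k hn1 hnN)
end
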